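/- arXiv:1210.5312 — 6 statements merged into one kernel-verified Lean document; each statement's English description precedes it below -/
import Mathlib

section
/- Let d ≥ 0 and α ≥ 0 be integers with α ≤ d, and let x₀, …, x_k be distinct real numbers. Consider the linear map sending a tuple (d₀, …, d_k) of univariate real polynomials, each of degree at most d − α − 1, to the polynomial ∑_{t=0}^{k} d_t(x)·(x − x_t)^(α+1). If (k+1)·(d − α) ≤ d + 1, then this map is injective; i.e., ∑ d_t(x)(x − x_t)^(α+1) = 0 forces all d_t = 0. -/
/-!
Write `c` for the last node. The operator `eulerOp c n : P ↦ n P - (X - c) P'` equals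
`P ↦ -(X - c)^(n+1) (P / (X - c)^n)'`, so it annihilates `(X - c)^n` and maps polynomials of
degree `≤ n` to polynomials of degree `< n`. Composing the operators with indices
`e, …, e + m - 1` (where `m = d - α`, `e = α + 1`) annihilates the term `D_c (X - c)^e`, and
turns every other term `D_t (X - x_t)^e` into `E_t (X - x_t)^(e - m)` with `deg E_t < m`.
Here `E_t = 0` forces `D_t = 0`: after pulling the full power of `X - x_t` out of `D_t`, each
step multiplies the value of the cofactor at `x_t` by a nonzero number. Since `k m ≤ e`,
induction on the number of nodes applies.
-/

open Polynomial

namespace Polynomial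

variable {K : Type*} [Field K]

noncomputable def eulerOp (c : K) (n : ℕ) : K[X] →ₗ[K] K[X] :=
  (n : K) • LinearMap.id - LinearMap.mulLeft K (X - C c) ∘ₗ derivative

theorem eulerOp_apply (c : K) (n : ℕ) (P : K[X]) :
    eulerOp c n P = C (n : K) * P - (X - C c) * derivative P := by
  simp [eulerOp, smul_eq_C_mul]

theorem coeff_eulerOp (c : K) (n : ℕ) (P : K[X]) (b : ℕ) :
    (eulerOp c n P).coeff b = (n - b) * P.coeff b + c * (b + 1) * P.coeff (b + 1) := by
  rw [eulerOp_apply, sub_mul, coeff_sub, coeff_sub, coeff_C_mul, coeff_C_mul, coeff_derivative]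
  rcases b with _ | b
  · simp
  · rw [coeff_X_mul, coeff_derivative]
    push_cast
    ring

theorem degree_eulerOp_lt {c : K} {n : ℕ} {P : K[X]} (hP : P.degree ≤ n) :
    (eulerOp c n P).degree < n := by
  rw [degree_lt_iff_coeff_zero]
  intro b hb
  have hvanish : ∀ i, n < i → P.coeff i = 0 := fun i hi =>
    coeff_eq_zero_of_degree_lt (hP.trans_lt (by exact_mod_cast hi))
  rw [coeff_eulerOp, hvanish (b + 1) (by omega), mul_zero, add_zero]
  rcases hb.eq_or_lt with rfl | hlt
  · simp
  · rw [hvanish b hlt, mul_zero]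

theorem eulerOp_X_sub_C_pow_mul (c : K) (N M : ℕ) (D : K[X]) :
    eulerOp c (N + M) ((X - C c) ^ N * D) = (X - C c) ^ N * eulerOp c M D := by
  rcases N with _ | N
  · simp
  · simp only [eulerOp_apply, derivative_mul, derivative_X_sub_C_pow]
    push_cast
    simp only [map_add, map_natCast, map_one]
    ring

theorem exists_eulerOp_mul_X_sub_C_pow_succ_eval (c y : K) (n N : ℕ) (D : K[X]) :
    ∃ E : K[X], eulerOp c n (D * (X - C y) ^ (N + 1)) = E * (X - C y) ^ N ∧
      E.eval y = -((N + 1) * (y - c) * D.eval y) := by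
  refine ⟨C (n : K) * (X - C y) * D - C ((N + 1 : ℕ) : K) * (X - C c) * D
    - (X - C c) * (X - C y) * derivative D, ?_, by simp⟩
  simp only [eulerOp_apply, derivative_mul, derivative_X_sub_C_pow]
  push_cast
  simp only [map_add, map_natCast, map_one]
  ring

noncomputable def eulerOpIter (c : K) (e : ℕ) : ℕ → K[X] →ₗ[K] K[X]
  | 0 => LinearMap.id
  | j + 1 => eulerOpIter c e j ∘ₗ eulerOp c (e + j)

theorem eulerOpIter_X_sub_C_pow_mul (c : K) (e : ℕ) :
    ∀ (j : ℕ) {D : K[X]}, D.degree < j → eulerOpIter c e j ((X - C c) ^ e * D) = 0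
  | 0, D, hD => by
    rw [Nat.cast_zero, Nat.WithBot.lt_zero_iff, degree_eq_bot] at hD
    simp [hD]
  | j + 1, D, hD => by
    rw [eulerOpIter, LinearMap.comp_apply, eulerOp_X_sub_C_pow_mul]
    exact eulerOpIter_X_sub_C_pow_mul c e j (degree_eulerOp_lt (Order.le_of_lt_succ hD))

variable [CharZero K]

theorem eq_zero_of_eulerOp_mul_X_sub_C_pow_eq_zero {c y : K} (hyc : y ≠ c) {n N : ℕ}
    {D : K[X]} (h : eulerOp c n (D * (X - C y) ^ (N + 1)) = 0) : D = 0 := by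
  by_contra hD
  obtain ⟨U, hDU, hUy⟩ := exists_eq_pow_rootMultiplicity_mul_and_not_dvd D hD y
  generalize rootMultiplicity y D = r at hDU
  obtain ⟨E, hE, hEy⟩ := exists_eulerOp_mul_X_sub_C_pow_succ_eval c y n (r + N) U
  have hshift : D * (X - C y) ^ (N + 1) = U * (X - C y) ^ (r + N + 1) := by
    rw [hDU]; ring
  rw [hshift, hE] at h
  have hE0 : E = 0 := (mul_eq_zero.mp h).resolve_right (pow_ne_zero _ (X_sub_C_ne_zero y))
  have hU : U.eval y ≠ 0 := fun hr => hUy (dvd_iff_isRoot.mpr hr)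
  have hcoef : ((r + N : ℕ) + 1 : K) ≠ 0 := Nat.cast_add_one_ne_zero _
  rw [hE0, eval_zero, eq_comm, neg_eq_zero] at hEy
  exact mul_ne_zero (mul_ne_zero hcoef (sub_ne_zero.mpr hyc)) hU hEy

theorem exists_eulerOp_mul_X_sub_C_pow_succ_degree_lt {c y : K} (hyc : y ≠ c) {m N : ℕ}
    {D : K[X]} (hD : D.degree < m) :
    ∃ E : K[X], E.degree < m ∧ (E = 0 → D = 0) ∧
      eulerOp c (N + m) (D * (X - C y) ^ (N + 1)) = E * (X - C y) ^ N := by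
  obtain ⟨E, hE, -⟩ := exists_eulerOp_mul_X_sub_C_pow_succ_eval c y (N + m) N D
  refine ⟨E, ?_, fun hE0 =>
    eq_zero_of_eulerOp_mul_X_sub_C_pow_eq_zero hyc (by rw [hE, hE0, zero_mul]), hE⟩
  have hle : (D * (X - C y) ^ (N + 1)).degree ≤ ((N + m : ℕ) : WithBot ℕ) := by
    rcases eq_or_ne D 0 with rfl | hD0
    · simp
    rw [degree_eq_natDegree hD0] at hD
    rw [degree_mul, degree_pow, degree_X_sub_C, nsmul_one, degree_eq_natDegree hD0]
    norm_cast at hD ⊢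
    omega
  have hlt := degree_eulerOp_lt (c := c) hle
  rw [hE, degree_mul, degree_pow, degree_X_sub_C, nsmul_one, Nat.cast_add, add_comm E.degree] at hlt
  exact (WithBot.add_lt_add_iff_left (WithBot.natCast_ne_bot N)).1 hlt

theorem exists_eulerOpIter_mul_X_sub_C_pow {c y : K} (hyc : y ≠ c) (m N : ℕ) :
    ∀ (j : ℕ) {D : K[X]}, D.degree < m →
      ∃ E : K[X], E.degree < m ∧ (E = 0 → D = 0) ∧
        eulerOpIter c (N + m) j (D * (X - C y) ^ (N + j)) = E * (X - C y) ^ N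
  | 0, D, hD => ⟨D, hD, id, rfl⟩
  | j + 1, D, hD => by
    obtain ⟨E₁, hE₁, hE₁D, hstep⟩ :=
      exists_eulerOp_mul_X_sub_C_pow_succ_degree_lt (N := N + j) hyc hD
    obtain ⟨E, hE, hEE₁, hiter⟩ := exists_eulerOpIter_mul_X_sub_C_pow hyc m N j hE₁
    refine ⟨E, hE, hE₁D ∘ hEE₁, ?_⟩
    rw [eulerOpIter, LinearMap.comp_apply, add_right_comm N m j, ← add_assoc, hstep, hiter]

theorem eq_zero_of_sum_mul_X_sub_C_pow_eq_zero {m : ℕ} :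
    ∀ {k e : ℕ}, k * m ≤ e → ∀ {x : Fin (k + 1) → K}, Function.Injective x →
      ∀ {D : Fin (k + 1) → K[X]}, (∀ t, (D t).degree < m) →
        ∑ t, D t * (X - C (x t)) ^ e = 0 → ∀ t, D t = 0
  | 0, e, _, x, _, D, _, hsum => by
    intro t
    rw [Fin.sum_univ_one] at hsum
    obtain rfl : t = 0 := Fin.eq_zero t
    exact (mul_eq_zero.mp hsum).resolve_right (pow_ne_zero _ (X_sub_C_ne_zero _))
  | k + 1, e, hk, x, hx, D, hdeg, hsum => by
    obtain ⟨N, rfl⟩ : ∃ N, e = N + m := ⟨e - m, by rw [add_one_mul] at hk; omega⟩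
    set c := x (Fin.last (k + 1))
    have hne : ∀ t : Fin (k + 1), x t.castSucc ≠ c :=
      fun t h => (Fin.castSucc_lt_last t).ne (hx h)
    choose E hE hED hEeq using fun t : Fin (k + 1) =>
      exists_eulerOpIter_mul_X_sub_C_pow (hne t) m N m (hdeg t.castSucc)
    have hlast : eulerOpIter c (N + m) m (D (Fin.last (k + 1)) * (X - C c) ^ (N + m)) = 0 := by
      rw [mul_comm]
      exact eulerOpIter_X_sub_C_pow_mul c _ m (hdeg _)
    have hsumE : ∑ t : Fin (k + 1), E t * (X - C (x t.castSucc)) ^ N = 0 := by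
      have := congrArg (eulerOpIter c (N + m) m) hsum
      rwa [map_sum, map_zero, Fin.sum_univ_castSucc, hlast, add_zero,
        Finset.sum_congr rfl fun t _ => hEeq t] at this
    have hinit : ∀ t : Fin (k + 1), D t.castSucc = 0 := fun t =>
      hED t (eq_zero_of_sum_mul_X_sub_C_pow_eq_zero (by rw [add_one_mul] at hk; omega)
        (hx.comp (Fin.castSucc_injective _)) hE hsumE t)
    intro t
    refine Fin.lastCases ?_ hinit t
    rw [Fin.sum_univ_castSucc, Finset.sum_eq_zero fun t _ => by rw [hinit t, zero_mul],
      zero_add] at hsum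
    exact (mul_eq_zero.mp hsum).resolve_right (pow_ne_zero _ (X_sub_C_ne_zero _))

end Polynomial

theorem conformality_injective_general (d α k : ℕ)
    (x : Fin (k + 1) → ℝ) (hx : Function.Injective x)
    (hk : (k + 1) * (d - α) ≤ d + 1)
    (D : Fin (k + 1) → ℝ[X])
    (hdeg : ∀ t, (D t).degree < (d - α : ℕ))
    (hsum : ∑ t, D t * (X - C (x t)) ^ (α + 1) = 0) :
    ∀ t, D t = 0 :=
  eq_zero_of_sum_mul_X_sub_C_pow_eq_zero (by rw [add_one_mul] at hk; omega) hx hdeg hsum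

/-- Vanished l-edge case: if `(k+1)(d−α) ≤ d+1` and the `x_t` are distinct, then
`∑ d_t(x)(x−x_t)^(α+1) = 0` with `deg d_t ≤ d−α−1` forces all `d_t = 0`.
(Here `(D t).degree < d − α` encodes "degree at most `d−α−1`", the zero
polynomial being the only one of degree `< 0`.) -/
theorem conformality_injective (d α k : ℕ) (hαd : α ≤ d)
    (x : Fin (k + 1) → ℝ) (hx : Function.Injective x)
    (hk : (k + 1) * (d - α) ≤ d + 1)
    (D : Fin (k + 1) → ℝ[X])
    (hdeg : ∀ t, (D t).degree < (d - α : ℕ))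
    (hsum : ∑ t, D t * (X - C (x t)) ^ (α + 1) = 0) :
    ∀ t, D t = 0 :=
  conformality_injective_general d α k x hx hk D hdeg hsum
end

section
/- Let d ≥ 0 and α ≥ 0 be integers with α < d, and let x₀, …, x_k be distinct real numbers. The space of tuples (d₀, …, d_k) of univariate real polynomials, each of degree at most d − α − 1, satisfying ∑_{t=0}^{k} d_t(x)·(x − x_t)^(α+1) = 0, has dimension max(0, (k+1)(d − α) − (d + 1)). -/
open Polynomial

/-- The conformality map along an l-edge: a tuple of cofactors `(d_t)`, each of
degree `< d − α` (i.e. at most `d − α − 1`), is sent to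
`∑_t d_t(x)·(x − x_t)^(α+1)`. -/
noncomputable def confMap (k d α : ℕ) (x : Fin (k + 1) → ℝ) :
    (Fin (k + 1) → Polynomial.degreeLT ℝ (d - α)) →ₗ[ℝ] ℝ[X] where
  toFun D := ∑ t, (D t : ℝ[X]) * (X - C (x t)) ^ (α + 1)
  map_add' D E := by
    simp [add_mul, Finset.sum_add_distrib]
  map_smul' c D := by
    simp [Finset.smul_sum, smul_mul_assoc]


namespace ConfAux

/-- auxiliary polynomial whose constancy encodes the apolar pairing -/
noncomputable def apo (d : ℕ) (p f : ℝ[X]) : ℝ[X] :=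
  ∑ r ∈ Finset.range (d + 1), (-1 : ℝ) ^ r • (derivative^[r] p * derivative^[d - r] f)

lemma apo_deriv {d : ℕ} {p f : ℝ[X]} (hp : p.natDegree ≤ d) (hf : f.natDegree ≤ d) :
    derivative (apo d p f) = 0 := by
  have hP : derivative^[d + 1] p = 0 :=
    iterate_derivative_eq_zero (lt_of_le_of_lt hp (Nat.lt_succ_self d))
  have hF : derivative^[d + 1] f = 0 :=
    iterate_derivative_eq_zero (lt_of_le_of_lt hf (Nat.lt_succ_self d))
  have expand : derivative (apo d p f)
      = ∑ r ∈ Finset.range (d + 1), ((-1 : ℝ) ^ r •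
          (derivative^[r + 1] p * derivative^[d - r] f)
        + (-1 : ℝ) ^ r • (derivative^[r] p * derivative^[d - r + 1] f)) := by
    rw [apo, map_sum]
    refine Finset.sum_congr rfl fun r _ => ?_
    have e1 : ∀ (q : ℝ[X]) (n : ℕ), derivative (derivative^[n] q) = derivative^[n + 1] q :=
      fun q n => (Function.iterate_succ_apply' _ _ _).symm
    rw [derivative_smul, derivative_mul, smul_add, e1, e1]
  rw [expand, Finset.sum_add_distrib]
  have h1 : ∑ r ∈ Finset.range (d + 1),
      (-1 : ℝ) ^ r • (derivative^[r + 1] p * derivative^[d - r] f)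
      = ∑ r ∈ Finset.range d, (-1 : ℝ) ^ r • (derivative^[r + 1] p * derivative^[d - r] f) := by
    rw [Finset.sum_range_succ, hP, zero_mul, smul_zero, add_zero]
  have h2 : ∑ r ∈ Finset.range (d + 1),
      (-1 : ℝ) ^ r • (derivative^[r] p * derivative^[d - r + 1] f)
      = -∑ r ∈ Finset.range d, (-1 : ℝ) ^ r • (derivative^[r + 1] p * derivative^[d - r] f) := by
    rw [Finset.sum_range_succ']
    have h0 : derivative^[d - 0 + 1] f = 0 := by simpa using hF
    rw [h0, mul_zero, smul_zero, add_zero, ← Finset.sum_neg_distrib]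
    refine Finset.sum_congr rfl fun r hr => ?_
    have hr' : r < d := Finset.mem_range.mp hr
    have : d - (r + 1) + 1 = d - r := by omega
    rw [this, pow_succ, mul_comm, ← smul_smul]
    simp
  rw [h1, h2, add_neg_cancel]


lemma apo_add_left (d : ℕ) (p q f : ℝ[X]) :
    apo d (p + q) f = apo d p f + apo d q f := by
  simp [apo, iterate_map_add, add_mul, smul_add, Finset.sum_add_distrib]

lemma apo_smul_left (d : ℕ) (c : ℝ) (p f : ℝ[X]) :
    apo d (c • p) f = c • apo d p f := by
  simp only [apo, iterate_derivative_smul, smul_mul_assoc, Finset.smul_sum]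
  exact Finset.sum_congr rfl fun r _ => smul_comm _ _ _

lemma apo_add_right (d : ℕ) (p f g : ℝ[X]) :
    apo d p (f + g) = apo d p f + apo d p g := by
  simp [apo, iterate_map_add, mul_add, smul_add, Finset.sum_add_distrib]

lemma apo_smul_right (d : ℕ) (c : ℝ) (p f : ℝ[X]) :
    apo d p (c • f) = c • apo d p f := by
  simp only [apo, iterate_derivative_smul, mul_smul_comm, Finset.smul_sum]
  exact Finset.sum_congr rfl fun r _ => smul_comm _ _ _

/-- The apolar pairing on polynomials (relative to degree `d`). -/
noncomputable def bform (d : ℕ) : ℝ[X] →ₗ[ℝ] ℝ[X] →ₗ[ℝ] ℝ :=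
  LinearMap.mk₂ ℝ (fun p f => (apo d p f).coeff 0)
    (fun p q f => by simp [apo_add_left])
    (fun c p f => by simp [apo_smul_left])
    (fun p f g => by simp [apo_add_right])
    (fun c p f => by simp [apo_smul_right])

lemma bform_apply (d : ℕ) (p f : ℝ[X]) : bform d p f = (apo d p f).coeff 0 := rfl

lemma bform_eq_eval {d : ℕ} {p f : ℝ[X]} (hp : p.natDegree ≤ d) (hf : f.natDegree ≤ d)
    (y : ℝ) :
    bform d p f = ∑ r ∈ Finset.range (d + 1),
      (-1 : ℝ) ^ r * ((derivative^[r] p).eval y * (derivative^[d - r] f).eval y) := by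
  have hc : apo d p f = C ((apo d p f).coeff 0) :=
    eq_C_of_derivative_eq_zero (apo_deriv hp hf)
  have : (apo d p f).eval y = (apo d p f).coeff 0 := by rw [hc]; simp
  rw [bform_apply, ← this, apo, eval_finset_sum]
  exact Finset.sum_congr rfl fun r _ => by simp [smul_eq_mul]

lemma bform_X_pow_left {d j : ℕ} (hj : j ≤ d) (f : ℝ[X]) :
    bform d (X ^ j) f
      = (-1 : ℝ) ^ j * ((Nat.factorial j : ℝ) * ((Nat.factorial (d - j) : ℝ) * f.coeff (d - j))) := by
  rw [bform_apply, apo, finset_sum_coeff]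
  have hterm : ∀ r ∈ Finset.range (d + 1), r ≠ j →
      ((-1 : ℝ) ^ r • (derivative^[r] (X ^ j : ℝ[X]) * derivative^[d - r] f)).coeff 0 = 0 := by
    intro r _ hrj
    rw [coeff_smul, mul_coeff_zero, iterate_derivative_X_pow_eq_natCast_mul]
    rcases lt_or_gt_of_ne hrj with h | h
    · have h0 : (0 : ℕ) ≠ j - r := by omega
      simp [mul_coeff_zero, coeff_X_pow, h0]
    · rw [Nat.descFactorial_eq_zero_iff_lt.mpr h]
      simp
  rw [Finset.sum_eq_single_of_mem j (Finset.mem_range.mpr (by omega)) hterm]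
  rw [coeff_smul, mul_coeff_zero, iterate_derivative_X_pow_eq_natCast_mul, Nat.sub_self,
    pow_zero, mul_one, coeff_iterate_derivative, Nat.zero_add, Nat.descFactorial_self]
  simp only [Polynomial.coeff_natCast_ite, if_pos rfl, smul_eq_mul, nsmul_eq_mul,
    Nat.descFactorial_self]
  push_cast
  ring

lemma bform_X_pow_right {d j : ℕ} (hj : j ≤ d) (p : ℝ[X]) :
    bform d p (X ^ j)
      = (-1 : ℝ) ^ (d - j) * ((Nat.factorial j : ℝ) * ((Nat.factorial (d - j) : ℝ) * p.coeff (d - j))) := by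
  rw [bform_apply, apo, finset_sum_coeff]
  have hterm : ∀ r ∈ Finset.range (d + 1), r ≠ d - j →
      ((-1 : ℝ) ^ r • (derivative^[r] p * derivative^[d - r] (X ^ j : ℝ[X]))).coeff 0 = 0 := by
    intro r hr hrj
    have hrd : r ≤ d := by have := Finset.mem_range.mp hr; omega
    rw [coeff_smul, mul_coeff_zero, iterate_derivative_X_pow_eq_natCast_mul]
    rcases lt_or_gt_of_ne (show d - r ≠ j by omega) with h | h
    · have h0 : (0 : ℕ) ≠ j - (d - r) := by omega
      simp [mul_coeff_zero, coeff_X_pow, h0]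
    · rw [Nat.descFactorial_eq_zero_iff_lt.mpr h]
      simp
  rw [Finset.sum_eq_single_of_mem (d - j) (Finset.mem_range.mpr (by omega)) hterm]
  have hdd : d - (d - j) = j := by omega
  rw [coeff_smul, mul_coeff_zero, hdd, iterate_derivative_X_pow_eq_natCast_mul, Nat.sub_self,
    pow_zero, mul_one, coeff_iterate_derivative, Nat.zero_add, Nat.descFactorial_self]
  simp only [Polynomial.coeff_natCast_ite, if_pos rfl, smul_eq_mul, nsmul_eq_mul,
    Nat.descFactorial_self]
  push_cast
  ring

/-- Derivative characterisation of divisibility by `(X - a)^n` over `ℝ`. -/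
lemma dvd_iff_derivs {a : ℝ} {n : ℕ} {f : ℝ[X]} :
    (X - C a) ^ n ∣ f ↔ ∀ i < n, (derivative^[i] f).eval a = 0 := by
  rw [X_sub_C_pow_dvd_iff, X_pow_dvd_iff]
  have key : ∀ i : ℕ, (f.comp (X + C a)).coeff i = 0 ↔ (derivative^[i] f).eval a = 0 := by
    intro i
    have h1 : (f.comp (X + C a)).coeff i = (hasseDeriv i f).eval a := by
      rw [← taylor_apply, taylor_coeff]
    have h2 : (derivative^[i] f).eval a = (Nat.factorial i : ℝ) * (hasseDeriv i f).eval a := by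
      have := congrFun (factorial_smul_hasseDeriv (R := ℝ) i) f
      rw [← this]
      simp [nsmul_eq_mul]
    rw [h1, h2]
    constructor
    · intro h; rw [h, mul_zero]
    · intro h
      rcases mul_eq_zero.mp h with h' | h'
      · exact absurd h' (by positivity)
      · exact h'
  exact forall₂_congr fun i _ => key i

lemma deriv_pow_eval (a : ℝ) (n r : ℕ) :
    (derivative^[r] ((X - C a) ^ n)).eval a = if r = n then (Nat.factorial n : ℝ) else 0 := by
  rw [iterate_derivative_X_sub_pow]
  rcases eq_or_ne r n with rfl | h
  · simp [Nat.descFactorial_self]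
  · rw [if_neg h]
    rcases lt_or_gt_of_ne h with hlt | hgt
    · have : n - r ≠ 0 := by omega
      simp [zero_pow this]
    · rw [Nat.descFactorial_eq_zero_iff_lt.mpr hgt]
      simp


lemma finrank_degreeLT (n : ℕ) : Module.finrank ℝ (degreeLT ℝ n) = n := by
  have : FiniteDimensional ℝ (degreeLT ℝ n) := (degreeLTEquiv ℝ n).symm.finiteDimensional
  rw [(degreeLTEquiv ℝ n).finrank_eq, Module.finrank_pi]
  simp

instance fd_degreeLT (n : ℕ) : FiniteDimensional ℝ (degreeLT ℝ n) :=
  (degreeLTEquiv ℝ n).symm.finiteDimensional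

lemma natDegree_le_of_mem_degreeLT {n : ℕ} (hn : 1 ≤ n) {q : ℝ[X]} (hq : q ∈ degreeLT ℝ n) :
    q.natDegree ≤ n - 1 := by
  rcases eq_or_ne q 0 with rfl | h0
  · simp
  · rw [mem_degreeLT, degree_eq_natDegree h0, Nat.cast_lt] at hq
    omega

end ConfAux


set_option maxHeartbeats 1600000 in
open ConfAux in
/-- Dimension of the solution space of a single edge conformality condition:
the tuples `(d₀, …, d_k)` of polynomials of degree at most `d − α − 1` with
`∑_t d_t(x)(x − x_t)^(α+1) = 0` form a space of dimension
`max(0, (k+1)(d − α) − (d + 1))`. -/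
theorem conformality_kernel_dim (d α k : ℕ) (hαd : α < d)
    (x : Fin (k + 1) → ℝ) (hx : Function.Injective x) :
    (Module.finrank ℝ (LinearMap.ker (confMap k d α x)) : ℤ) =
      max 0 ((k + 1) * ((d : ℤ) - α) - (d + 1)) := by
  classical
  set m : ℕ := d - α with hmdef
  have hm1 : 1 ≤ m := by omega
  set W : Submodule ℝ ℝ[X] := degreeLT ℝ (d + 1) with hWdef
  haveI : FiniteDimensional ℝ W := fd_degreeLT (d + 1)
  have hWrank : Module.finrank ℝ W = d + 1 := by rw [hWdef]; exact finrank_degreeLT (d + 1)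
  have hgdeg : ∀ t : Fin (k + 1), ((X - C (x t)) ^ (α + 1) : ℝ[X]).degree = ((α + 1 : ℕ) : WithBot ℕ) := by
    intro t; rw [degree_pow, degree_X_sub_C]; simp
  have hmem : ∀ D : Fin (k + 1) → degreeLT ℝ m, confMap k d α x D ∈ W := by
    intro D
    have he : confMap k d α x D = ∑ t, ((D t : ℝ[X]) * (X - C (x t)) ^ (α + 1)) := rfl
    rw [he]
    refine Submodule.sum_mem _ fun t _ => ?_
    rw [hWdef, mem_degreeLT]
    rcases eq_or_ne (D t : ℝ[X]) 0 with h0 | h0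
    · rw [h0, zero_mul, degree_zero]
      exact WithBot.bot_lt_coe _
    · have hg0 : ((X - C (x t)) ^ (α + 1) : ℝ[X]) ≠ 0 := pow_ne_zero _ (X_sub_C_ne_zero _)
      rw [degree_mul, hgdeg t, degree_eq_natDegree h0, ← Nat.cast_add, Nat.cast_lt]
      have hDt : (D t : ℝ[X]).natDegree ≤ m - 1 := natDegree_le_of_mem_degreeLT hm1 (D t).2
      omega
  set T0 : (Fin (k + 1) → degreeLT ℝ m) →ₗ[ℝ] W := (confMap k d α x).codRestrict W hmem
    with hT0def
  have hkereq : LinearMap.ker T0 = LinearMap.ker (confMap k d α x) :=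
    LinearMap.ker_codRestrict W _ hmem
  have hrank : Module.finrank ℝ (LinearMap.range T0)
      + Module.finrank ℝ (LinearMap.ker (confMap k d α x)) = (k + 1) * m := by
    rw [← hkereq]
    have hdom : Module.finrank ℝ (Fin (k + 1) → degreeLT ℝ m) = (k + 1) * m := by
      rw [Module.finrank_pi_fintype]
      simp [finrank_degreeLT, Finset.sum_const, mul_comm]
    have h1 := LinearMap.finrank_range_add_finrank_ker T0
    rw [hdom] at h1
    exact h1
  -- the bilinear form
  set BW : LinearMap.BilinForm ℝ W := (bform d).compl₁₂ W.subtype W.subtype with hBWdef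
  have hBWapply : ∀ p f : W, BW p f = bform d (p : ℝ[X]) (f : ℝ[X]) := fun p f => rfl
  have hWnat : ∀ f : W, (f : ℝ[X]).natDegree ≤ d := by
    intro f
    have h2 : (f : ℝ[X]) ∈ degreeLT ℝ (d + 1) := f.2
    rw [degreeLT_succ_eq_degreeLE, mem_degreeLE] at h2
    exact natDegree_le_iff_degree_le.mpr h2
  have hXmem : ∀ j, j ≤ d → (X ^ j : ℝ[X]) ∈ W := by
    intro j hj
    rw [hWdef, mem_degreeLT, degree_X_pow, Nat.cast_lt]
    omega
  have hnd : BW.Nondegenerate := by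
    refine LinearMap.BilinForm.Nondegenerate.ofSeparatingLeft ?_
    intro p hp
    apply Subtype.ext
    rw [ZeroMemClass.coe_zero]
    apply Polynomial.ext
    intro n
    rw [coeff_zero]
    rcases le_or_gt n d with hn | hn
    · have hz := hp ⟨X ^ (d - n), hXmem _ (by omega)⟩
      rw [hBWapply, bform_X_pow_right (by omega : d - n ≤ d),
        (show d - (d - n) = n by omega)] at hz
      have hne1 : ((-1 : ℝ)) ^ n ≠ 0 := pow_ne_zero _ (by norm_num)
      have hne2 : ((Nat.factorial (d - n) : ℝ)) ≠ 0 := Nat.cast_ne_zero.mpr (Nat.factorial_ne_zero _)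
      have hne3 : ((Nat.factorial n : ℝ)) ≠ 0 := Nat.cast_ne_zero.mpr (Nat.factorial_ne_zero _)
      rcases mul_eq_zero.mp hz with h | h
      · exact absurd h hne1
      rcases mul_eq_zero.mp h with h | h
      · exact absurd h hne2
      rcases mul_eq_zero.mp h with h | h
      · exact absurd h hne3
      simpa using h
    · have h2 : (p : ℝ[X]) ∈ degreeLT ℝ (d + 1) := p.2
      rw [mem_degreeLT] at h2
      exact coeff_eq_zero_of_degree_lt (lt_of_lt_of_le h2 (by exact_mod_cast by omega))
  set S : Submodule ℝ W := LinearMap.range T0 with hSdef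
  set L : W →ₗ[ℝ] Module.Dual ℝ S := BW.compl₂ S.subtype with hLdef
  have hLsurj : Function.Surjective L := by
    have hLeq : L = S.dualRestrict.comp (LinearMap.BilinForm.toDual BW hnd).toLinearMap := by
      ext f s; rfl
    rw [hLeq, LinearMap.coe_comp]
    exact Subspace.dualRestrict_surjective.comp (LinearEquiv.surjective _)
  have hdim2 : Module.finrank ℝ (LinearMap.ker L) + Module.finrank ℝ S = d + 1 := by
    have h1 := LinearMap.finrank_range_add_finrank_ker L
    rw [LinearMap.range_eq_top.mpr hLsurj, finrank_top] at h1
    have hdual : Module.finrank ℝ (Module.Dual ℝ S) = Module.finrank ℝ S :=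
      Subspace.dual_finrank_eq (K := ℝ) (V := ↥S)
    rw [hdual, hWrank] at h1
    omega
  -- divisibility characterisation of `ker L`
  set P : ℝ[X] := ∏ t : Fin (k + 1), (X - C (x t)) ^ m with hPdef
  have hPne : P ≠ 0 := by
    rw [hPdef]
    exact Finset.prod_ne_zero_iff.mpr fun t _ => pow_ne_zero _ (X_sub_C_ne_zero _)
  have hPdeg : P.natDegree = (k + 1) * m := by
    rw [hPdef, natDegree_prod _ _ fun t _ => pow_ne_zero _ (X_sub_C_ne_zero _)]
    simp [natDegree_pow, mul_comm]
  have hmemker : ∀ f : W, f ∈ LinearMap.ker L ↔ P ∣ (f : ℝ[X]) := by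
    intro f
    rw [LinearMap.mem_ker]
    constructor
    · intro hf
      have hdvd : ∀ t, (X - C (x t)) ^ m ∣ (f : ℝ[X]) := by
        intro t
        rw [dvd_iff_derivs]
        intro i hi
        set s : ℕ := m - 1 - i with hsdef
        have hq : ((X - C (x t)) ^ s : ℝ[X]) ∈ degreeLT ℝ m := by
          rw [mem_degreeLT, degree_pow, degree_X_sub_C]
          simp only [nsmul_eq_mul, mul_one]
          exact_mod_cast (by omega : s < m)
        set v : Fin (k + 1) → degreeLT ℝ m := Pi.single t ⟨(X - C (x t)) ^ s, hq⟩ with hvdef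
        have hTv : confMap k d α x v = (X - C (x t)) ^ (s + (α + 1)) := by
          show (∑ t', ((v t' : ℝ[X]) * (X - C (x t')) ^ (α + 1))) = _
          rw [Finset.sum_eq_single_of_mem t (Finset.mem_univ t)]
          · rw [hvdef, Pi.single_eq_same, ← pow_add]
          · intro t' _ ht'
            rw [hvdef, Pi.single_eq_of_ne ht', ZeroMemClass.coe_zero, zero_mul]
        have hz : bform d (f : ℝ[X]) (confMap k d α x v) = 0 := by
          have h0 := DFunLike.congr_fun hf ⟨T0 v, LinearMap.mem_range_self T0 v⟩
          have h1 : bform d (f : ℝ[X]) (T0 v : ℝ[X]) = 0 := by simpa [hLdef, hBWapply] using h0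
          exact h1
        rw [hTv] at hz
        have hnle : ((X - C (x t)) ^ (s + (α + 1)) : ℝ[X]).natDegree ≤ d := by
          rw [natDegree_pow, natDegree_X_sub_C]
          omega
        rw [bform_eq_eval (hWnat f) hnle (x t)] at hz
        have hother : ∀ r ∈ Finset.range (d + 1), r ≠ d - (s + (α + 1)) →
            (-1 : ℝ) ^ r * ((derivative^[r] (f : ℝ[X])).eval (x t)
              * (derivative^[d - r] ((X - C (x t)) ^ (s + (α + 1)))).eval (x t)) = 0 := by
          intro r hr hrne
          have hrd : r < d + 1 := Finset.mem_range.mp hr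
          rw [deriv_pow_eval, if_neg (by omega)]
          ring
        rw [Finset.sum_eq_single_of_mem (d - (s + (α + 1)))
          (Finset.mem_range.mpr (by omega)) hother] at hz
        rw [deriv_pow_eval, if_pos (by omega)] at hz
        have hieq : d - (s + (α + 1)) = i := by omega
        rw [hieq] at hz
        have hne1 : ((-1 : ℝ)) ^ i ≠ 0 := pow_ne_zero _ (by norm_num)
        have hne2 : ((Nat.factorial (s + (α + 1)) : ℝ)) ≠ 0 :=
          Nat.cast_ne_zero.mpr (Nat.factorial_ne_zero _)
        rcases mul_eq_zero.mp hz with h | h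
        · exact absurd h hne1
        rcases mul_eq_zero.mp h with h | h
        · exact h
        · exact absurd h hne2
      refine Finset.prod_dvd_of_coprime ?_ fun t _ => hdvd t
      intro a _ b _ hab
      exact (Polynomial.pairwise_coprime_X_sub_C hx hab).pow
    · intro hdvd
      apply LinearMap.ext
      intro s'
      obtain ⟨v, hv⟩ := s'.2
      have hz : bform d (f : ℝ[X]) (confMap k d α x v) = 0 := by
        have he : confMap k d α x v = ∑ t', ((v t' : ℝ[X]) * (X - C (x t')) ^ (α + 1)) := rfl
        rw [he, map_sum]
        refine Finset.sum_eq_zero fun t _ => ?_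
        have hqd : ((v t : ℝ[X]) * (X - C (x t)) ^ (α + 1)).natDegree ≤ d := by
          refine le_trans (natDegree_mul_le) ?_
          rw [natDegree_pow, natDegree_X_sub_C]
          have := natDegree_le_of_mem_degreeLT hm1 (v t).2
          omega
        rw [bform_eq_eval (hWnat f) hqd (x t)]
        refine Finset.sum_eq_zero fun r hr => ?_
        have hrd : r < d + 1 := Finset.mem_range.mp hr
        rcases lt_or_ge r m with hrm | hrm
        · have h1 : (derivative^[r] (f : ℝ[X])).eval (x t) = 0 := by
            refine (dvd_iff_derivs.mp ?_) r hrm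
            exact dvd_trans
              (Finset.dvd_prod_of_mem (fun t' => (X - C (x t')) ^ m) (Finset.mem_univ t)) hdvd
          rw [h1]
          ring
        · have h2 : (derivative^[d - r] ((v t : ℝ[X]) * (X - C (x t)) ^ (α + 1))).eval (x t) = 0 := by
            exact (dvd_iff_derivs.mp (dvd_mul_left _ _)) (d - r) (show d - r < α + 1 by omega)
          rw [h2]
          ring
      have hs1 : (s' : W) = T0 v := hv.symm
      show BW f ((s' : W)) = 0
      rw [hs1]
      have : (T0 v : ℝ[X]) = confMap k d α x v := rfl
      rw [hBWapply, this]
      exact hz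
  -- compute the dimension of `ker L` and conclude
  have hN : Module.finrank ℝ (LinearMap.ker L) = (d + 1) - min (d + 1) ((k + 1) * m) := by
    rcases le_or_gt (d + 1) ((k + 1) * m) with hcase | hcase
    · have hbot : LinearMap.ker L = ⊥ := by
        rw [Submodule.eq_bot_iff]
        intro f hf
        have hdvd := (hmemker f).mp hf
        rcases eq_or_ne (f : ℝ[X]) 0 with h0 | h0
        · exact Subtype.ext h0
        · exfalso
          have hd1 := natDegree_le_of_dvd hdvd h0
          have hd2 := hWnat f
          omega
      rw [hbot, finrank_bot]
      omega
    · set c : ℕ := (d + 1) - (k + 1) * m with hcdef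
      have hc1 : 1 ≤ c := by omega
      have hmulmem : ∀ g : degreeLT ℝ c, P * (g : ℝ[X]) ∈ W := by
        intro g
        rw [hWdef, mem_degreeLT]
        rcases eq_or_ne (g : ℝ[X]) 0 with h0 | h0
        · rw [h0, mul_zero, degree_zero]
          exact WithBot.bot_lt_coe _
        · rw [degree_mul, degree_eq_natDegree hPne, degree_eq_natDegree h0, ← Nat.cast_add,
            Nat.cast_lt]
          have := natDegree_le_of_mem_degreeLT hc1 g.2
          omega
      have hkerLmem : ∀ g : degreeLT ℝ c, (⟨P * (g : ℝ[X]), hmulmem g⟩ : W) ∈ LinearMap.ker L := by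
        intro g
        rw [hmemker]
        exact dvd_mul_right P _
      set μ : degreeLT ℝ c →ₗ[ℝ] LinearMap.ker L :=
        { toFun := fun g => ⟨⟨P * (g : ℝ[X]), hmulmem g⟩, hkerLmem g⟩
          map_add' := by
            intro a b
            apply Subtype.ext
            apply Subtype.ext
            simp [mul_add]
          map_smul' := by
            intro r a
            apply Subtype.ext
            apply Subtype.ext
            simp [mul_smul_comm] } with hμdef
      have hμbij : Function.Bijective μ := by
        constructor
        · intro a b hab
          apply Subtype.ext
          have h1 : P * (a : ℝ[X]) = P * (b : ℝ[X]) :=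
            congrArg (fun z : LinearMap.ker L => ((z : W) : ℝ[X])) hab
          exact mul_left_cancel₀ hPne h1
        · intro f
          obtain ⟨g, hg⟩ := (hmemker f.1).mp f.2
          have hgmem : g ∈ degreeLT ℝ c := by
            rw [mem_degreeLT]
            rcases eq_or_ne g 0 with rfl | h0
            · rw [degree_zero]
              exact WithBot.bot_lt_coe _
            · have hf0 : ((f.1 : W) : ℝ[X]) ≠ 0 := by
                rw [hg]
                exact mul_ne_zero hPne h0
              have hd2 := hWnat f.1
              have hd3 : ((f.1 : W) : ℝ[X]).natDegree = P.natDegree + g.natDegree := by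
                rw [hg, natDegree_mul hPne h0]
              rw [degree_eq_natDegree h0, Nat.cast_lt]
              omega
          refine ⟨⟨g, hgmem⟩, ?_⟩
          apply Subtype.ext
          apply Subtype.ext
          exact hg.symm
      have e : (degreeLT ℝ c) ≃ₗ[ℝ] LinearMap.ker L := LinearEquiv.ofBijective μ hμbij
      have heq : Module.finrank ℝ (degreeLT ℝ c) = Module.finrank ℝ (LinearMap.ker L) :=
        e.finrank_eq
      rw [finrank_degreeLT c] at heq
      omega
  -- final arithmetic
  rw [hN] at hdim2
  have hmZ : ((m : ℕ) : ℤ) = (d : ℤ) - (α : ℤ) := by rw [hmdef, Nat.cast_sub hαd.le]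
  have hZ : ((k : ℤ) + 1) * ((d : ℤ) - (α : ℤ)) = (((k + 1) * m : ℕ) : ℤ) := by
    rw [← hmZ]
    push_cast
    ring
  rw [hZ]
  omega
end

section
/- Let d ≥ 1 and α ≥ 0 with α < d, and let x₀, …, x_k be distinct reals with (k+1)(d − α) ≥ d + 1. Then the linear map from tuples (d₀, …, d_k) of polynomials of degree ≤ d − α − 1 to polynomials of degree ≤ d given by (d₀,…,d_k) ↦ ∑_{t=0}^k d_t(x)(x − x_t)^(α+1) is surjective. -/
/-!
By duality it suffices to show that a linear functional `f` on polynomials killing every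
`(X - x_t) ^ j` with `α < j ≤ d` kills all polynomials of degree at most `d`. The polynomial
`G(s) = f ((X - s) ^ d)` has degree at most `d`, and expanding `X - s = (X - x_t) + (x_t - s)`
shows that `(s - x_t) ^ (d - α)` divides it for every `t`. As `(k + 1)(d - α) > d`, `G = 0`;
expanding instead around `0`, the coefficients of `G` are `± binom(d, i) f (X ^ i)`, so
`f (X ^ i) = 0` for `i ≤ d`.
-/

open Polynomial Finset Function

namespace Polynomial

variable {K : Type*} [Field K]

theorem eq_zero_of_forall_pow_X_sub_C_dvd {ι : Type*} [Fintype ι] {x : ι → K} (hx : Injective x)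
    {m : ℕ} {p : K[X]} (hdeg : p.natDegree < Fintype.card ι * m)
    (hdvd : ∀ i, (X - C (x i)) ^ m ∣ p) : p = 0 := by
  refine eq_zero_of_dvd_of_natDegree_lt
    (Fintype.prod_dvd_of_coprime (fun i j hij ↦ (pairwise_coprime_X_sub_C hx hij).pow) hdvd) ?_
  rw [natDegree_prod_of_monic _ _ fun i _ ↦ (monic_X_sub_C _).pow m]
  simpa using hdeg

/-- For a linear functional `f`, the polynomial `s ↦ f ((X - s) ^ d)`, expanded in powers of
`a - s` by the binomial theorem. -/
noncomputable def apolar (f : K[X] →ₗ[K] K) (d : ℕ) (a : K) : K[X] :=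
  ∑ j ∈ range (d + 1), C (d.choose j * f ((X - C a) ^ j)) * (C a - X) ^ (d - j)

section Apolar

variable (f : K[X] →ₗ[K] K) (d : ℕ)

theorem eval_apolar (a s : K) : (apolar f d a).eval s = f ((X - C s) ^ d) := by
  have hsplit : (X - C s : K[X]) = (X - C a) + C (a - s) := by rw [C_sub]; ring
  rw [hsplit, add_pow, map_sum, apolar, eval_finsetSum]
  refine sum_congr rfl fun j _ ↦ ?_
  rw [show (X - C a) ^ j * C (a - s) ^ (d - j) * (d.choose j : K[X])
      = ((a - s) ^ (d - j) * d.choose j : K) • (X - C a) ^ j by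
    rw [smul_eq_C_mul, C_mul, C_pow, C_eq_natCast]; ring, map_smul]
  simp only [eval_mul, eval_C, eval_pow, eval_sub, eval_X, smul_eq_mul]
  ring

theorem apolar_eq_apolar [Infinite K] (a b : K) : apolar f d a = apolar f d b :=
  Polynomial.funext fun s ↦ by rw [eval_apolar, eval_apolar]

theorem natDegree_apolar_le (a : K) : (apolar f d a).natDegree ≤ d := by
  refine natDegree_sum_le_of_forall_le _ _ fun j _ ↦ (natDegree_C_mul_le _ _).trans ?_
  have hlin : (C a - X).natDegree ≤ 1 := by rw [← neg_sub, natDegree_neg, natDegree_X_sub_C]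
  exact (natDegree_pow_le_of_le _ hlin).trans (by omega)

theorem pow_dvd_apolar {α : ℕ} {a : K} (h : ∀ j ∈ Ioc α d, f ((X - C a) ^ j) = 0) :
    (X - C a) ^ (d - α) ∣ apolar f d a := by
  refine dvd_sum fun j hj ↦ ?_
  rcases le_or_gt j α with hjα | hαj
  · refine dvd_mul_of_dvd_right ((pow_dvd_pow (X - C a : K[X]) (by omega)).trans
      (pow_dvd_pow_of_dvd ?_ _)) _
    exact Dvd.intro (-1) (by ring)
  · rw [h j (mem_Ioc.2 ⟨hαj, by simpa [Nat.lt_succ_iff] using hj⟩), mul_zero, C_0, zero_mul]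
    exact dvd_zero _

theorem coeff_apolar_zero {i : ℕ} (hi : i ≤ d) :
    (apolar f d 0).coeff (d - i) = (-1) ^ (d - i) * (d.choose i * f (X ^ i)) := by
  have hterm : ∀ j, C (d.choose j * f ((X - C 0) ^ j)) * (C 0 - X) ^ (d - j)
      = C ((-1) ^ (d - j) * (d.choose j * f (X ^ j))) * X ^ (d - j) := fun j ↦ by
    rw [C_0, sub_zero, zero_sub, neg_pow]
    simp only [map_mul, map_pow, map_neg, map_one]
    ring
  simp only [apolar, hterm, finsetSum_coeff, coeff_C_mul_X_pow]
  rw [sum_eq_single_of_mem i (mem_range.2 (by omega)) fun j hj hji ↦ if_neg (by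
    have := mem_range.1 hj; omega), if_pos rfl]

theorem apply_eq_zero_of_apolar_eq_zero [CharZero K] (h : apolar f d 0 = 0) {q : K[X]}
    (hq : q ∈ degreeLE K d) : f q = 0 := by
  have hX : ∀ i ≤ d, f (X ^ i) = 0 := fun i hi ↦ by
    simpa [Nat.choose_pos hi |>.ne', h] using (coeff_apolar_zero f d hi).symm
  rw [mem_degreeLE, ← natDegree_le_iff_degree_le] at hq
  rw [q.as_sum_range' (d + 1) (Nat.lt_succ_of_le hq), map_sum]
  refine sum_eq_zero fun i hi ↦ ?_
  rw [← C_mul_X_pow_eq_monomial, ← smul_eq_C_mul, map_smul,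
    hX i (Nat.lt_succ_iff.1 (mem_range.1 hi)), smul_zero]

end Apolar

variable [CharZero K] {ι : Type*} [Fintype ι] {x : ι → K}

theorem apply_eq_zero_of_forall_pow_X_sub_C (hx : Injective x) {d α : ℕ}
    (hk : d < Fintype.card ι * (d - α)) (f : K[X] →ₗ[K] K)
    (hf : ∀ i, ∀ j ∈ Ioc α d, f ((X - C (x i)) ^ j) = 0) {q : K[X]} (hq : q ∈ degreeLE K d) :
    f q = 0 := by
  refine apply_eq_zero_of_apolar_eq_zero f d ?_ hq
  refine eq_zero_of_forall_pow_X_sub_C_dvd hx ((natDegree_apolar_le f d 0).trans_lt hk) fun i ↦ ?_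
  rw [apolar_eq_apolar f d 0 (x i)]
  exact pow_dvd_apolar f d (hf i)

theorem degreeLE_le_iSup_map_mulRight (hx : Injective x) {d α : ℕ}
    (hk : d < Fintype.card ι * (d - α)) :
    degreeLE K d ≤
      ⨆ i, (degreeLT K (d - α)).map (LinearMap.mulRight K ((X - C (x i)) ^ (α + 1))) := by
  intro q hq
  rw [← Subspace.forall_mem_dualAnnihilator_apply_eq_zero_iff]
  intro f hf
  rw [Submodule.mem_dualAnnihilator] at hf
  refine apply_eq_zero_of_forall_pow_X_sub_C hx hk f (fun i j hj ↦ hf _ ?_) hq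
  obtain ⟨hαj, hjd⟩ := mem_Ioc.1 hj
  refine Submodule.mem_iSup_of_mem i ⟨(X - C (x i)) ^ (j - (α + 1)), ?_, ?_⟩
  · rw [SetLike.mem_coe, mem_degreeLT, degree_pow, degree_X_sub_C, nsmul_one]
    exact_mod_cast (by omega : j - (α + 1) < d - α)
  · rw [LinearMap.mulRight_apply, ← pow_add, Nat.sub_add_cancel hαj]

end Polynomial

theorem conformality_surjective_general (d α k : ℕ)
    (x : Fin (k + 1) → ℝ) (hx : Function.Injective x)
    (hk : d + 1 ≤ (k + 1) * (d - α)) :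
    ∀ q : ℝ[X], q.degree ≤ d →
      ∃ D : Fin (k + 1) → ℝ[X],
        (∀ t, (D t).degree < (d - α : ℕ)) ∧
        ∑ t, D t * (X - C (x t)) ^ (α + 1) = q := by
  intro q hq
  have hmem := degreeLE_le_iSup_map_mulRight hx (by rwa [Fintype.card_fin]) (mem_degreeLE.2 hq)
  obtain ⟨g, hg, hgq⟩ := (Submodule.mem_iSup_iff_exists_finsupp _ q).1 hmem
  choose D hD hDg using fun t ↦ Submodule.mem_map.1 (hg t)
  refine ⟨D, fun t ↦ mem_degreeLT.1 (hD t), ?_⟩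
  rw [← hgq, Finsupp.sum_fintype _ _ fun _ ↦ rfl]
  exact sum_congr rfl fun t _ ↦ hDg t

/-- Surjectivity of the single-edge conformality map when the edge has enough
vertices: if `(k+1)(d−α) ≥ d+1`, every polynomial `q` of degree at most `d` can
be written as `∑_t d_t(x)(x − x_t)^(α+1)` with `deg d_t ≤ d − α − 1`. -/
theorem conformality_surjective (d α k : ℕ) (hd : 1 ≤ d) (hαd : α < d)
    (x : Fin (k + 1) → ℝ) (hx : Function.Injective x)
    (hk : d + 1 ≤ (k + 1) * (d - α)) :
    ∀ q : ℝ[X], q.degree ≤ d →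
      ∃ D : Fin (k + 1) → ℝ[X],
        (∀ t, (D t).degree < (d - α : ℕ)) ∧
        ∑ t, D t * (X - C (x t)) ^ (α + 1) = q :=
  conformality_surjective_general d α k x hx hk
end

section
/- Let E be a finite set (of 'l-edges'), let V be a finite set (of 'vertices'), let vert : E → Finset V assign to each edge its vertex set, and let N : E → ℕ. Suppose that for every nonempty subset S ⊆ E there exists e ∈ S such that the number of vertices of e not lying on any other edge of S, i.e. |vert(e) \ ⋃_{f ∈ S, f ≠ e} vert(f)|, is at least N(e). Then there exists an enumeration e₁, …, e_n of E such that for every j, |vert(e_j) \ ⋃_{k < j} vert(e_k)| ≥ N(e_j). -/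
/-!
Peel edges off from the end: the subset condition applied to the set of edges not yet placed
yields an edge with enough vertices avoiding all the others, and this edge may be placed last
among them, since every edge placed before it is one of those others.
-/

open Finset

section

variable {E V : Type*} [DecidableEq E] [DecidableEq V]

def IsDiagonalizingList (vert : E → Finset V) (N : E → ℕ) (l : List E) : Prop :=
  ∀ i (hi : i < l.length), N l[i] ≤ (vert l[i] \ (l.take i).toFinset.biUnion vert).card

theorem IsDiagonalizingList.append_singleton {vert : E → Finset V} {N : E → ℕ} {l : List E}
    (hl : IsDiagonalizingList vert N l) {e : E}
    (he : N e ≤ (vert e \ l.toFinset.biUnion vert).card) :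
    IsDiagonalizingList vert N (l ++ [e]) := by
  intro i hi
  rw [List.length_append, List.length_singleton] at hi
  rcases (Nat.lt_succ_iff.mp hi).lt_or_eq with hlt | rfl
  · rw [List.getElem_append_left hlt, List.take_append_of_le_length hlt.le]
    exact hl i hlt
  · simpa using he

theorem exists_isDiagonalizingList (vert : E → Finset V) (N : E → ℕ)
    (h : ∀ S : Finset E, S.Nonempty →
      ∃ e ∈ S, N e ≤ (vert e \ (S.erase e).biUnion vert).card)
    (S : Finset E) :
    ∃ l : List E, l.Nodup ∧ l.toFinset = S ∧ IsDiagonalizingList vert N l := by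
  induction S using Finset.strongInduction with
  | _ S ih =>
    rcases S.eq_empty_or_nonempty with rfl | hS
    · exact ⟨[], List.nodup_nil, rfl, fun i hi => absurd hi (Nat.not_lt_zero i)⟩
    obtain ⟨e, heS, he⟩ := h S hS
    obtain ⟨l, hnd, hlS, hl⟩ := ih (S.erase e) (erase_ssubset heS)
    have hel : e ∉ l := fun hel => notMem_erase e S (hlS ▸ List.mem_toFinset.mpr hel)
    refine ⟨l ++ [e], ?_, ?_, hl.append_singleton (hlS ▸ he)⟩
    · simpa using hnd.concat hel
    · simp [hlS, heS]

theorem List.image_getElem_filter_lt (l : List E) (j : Fin l.length) :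
    (univ.filter (· < j)).image (fun k : Fin l.length => l[k]) = (l.take j).toFinset := by
  ext a
  simp only [mem_image, mem_filter_univ, List.mem_toFinset, List.mem_take_iff_getElem]
  constructor
  · rintro ⟨k, hkj, rfl⟩
    exact ⟨k, lt_min hkj k.2, rfl⟩
  · rintro ⟨i, hi, rfl⟩
    exact ⟨⟨i, (lt_min_iff.mp hi).2⟩, (lt_min_iff.mp hi).1, rfl⟩

theorem exists_equiv_of_isDiagonalizingList {vert : E → Finset V} {N : E → ℕ} {l : List E}
    (hnd : l.Nodup) (hmem : ∀ a, a ∈ l) (hl : IsDiagonalizingList vert N l)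
    {n : ℕ} (hn : l.length = n) :
    ∃ σ : Fin n ≃ E, ∀ j : Fin n,
      N (σ j) ≤ (vert (σ j) \ (univ.filter (· < j)).biUnion (fun k => vert (σ k))).card := by
  subst hn
  refine ⟨hnd.getEquivOfForallMemList l hmem, fun j => ?_⟩
  have := hl j j.2
  rwa [← l.image_getElem_filter_lt j, image_biUnion] at this

end

/-- Sufficient direction of the characterization of diagonalizable T-meshes:
if every nonempty subset `S` of l-edges contains an edge `e` having at least
`N e` vertices not lying on any other edge of `S`, then there is an enumeration
`e₁, …, e_n` of all the edges in which each `e_j` has at least `N e_j` vertices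
not appearing on any earlier edge. -/
theorem diagonalizable_of_subset_condition {E V : Type*}
    [Fintype E] [DecidableEq E] [DecidableEq V]
    (vert : E → Finset V) (N : E → ℕ)
    (h : ∀ S : Finset E, S.Nonempty →
      ∃ e ∈ S, N e ≤ (vert e \ (S.erase e).biUnion vert).card) :
    ∃ σ : Fin (Fintype.card E) ≃ E,
      ∀ j : Fin (Fintype.card E),
        N (σ j) ≤
          (vert (σ j) \
            (Finset.univ.filter (fun k : Fin (Fintype.card E) => k < j)).biUnion
              (fun k => vert (σ k))).card := by
  obtain ⟨l, hnd, hl_univ, hl⟩ := exists_isDiagonalizingList vert N h univ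
  have hmem : ∀ a, a ∈ l := fun a => List.mem_toFinset.mp (hl_univ ▸ mem_univ a)
  have hlen : l.length = Fintype.card E := by
    rw [← List.toFinset_card_of_nodup hnd, hl_univ, card_univ]
  exact exists_equiv_of_isDiagonalizingList hnd hmem hl hlen
end

section
/- Let x₁ < x₂ < ⋯ < x_m be real numbers and let α ≥ 0, d ≥ α + 1 be integers with N = ⌈(d+1)/(d−α)⌉. If m ≥ N, then the (d+1) × (m(d−α)) matrix whose columns are the coefficient vectors of the polynomials x^p (x − x_t)^(α+1) (for 1 ≤ t ≤ m and 0 ≤ p ≤ d − α − 1) in the monomial basis 1, x, …, x^d has rank d + 1. -/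
/-!
A vector in the left kernel of the matrix is a functional `L` on polynomials that kills every
`X ^ p * (X - x_t) ^ (α + 1)`, hence every `(X - x_t) ^ j` with `α < j ≤ d`. The polynomial
`G(u) = L ((X - u) ^ d)` has degree `≤ d`, and its Taylor coefficients at `x_t` are, up to
binomial factors, the values `L ((X - x_t) ^ j)`; so `(u - x_t) ^ (d - α)` divides `G` for every
node. As `m (d - α) ≥ d + 1`, this forces `G = 0`, and the coefficients of `G` are
`± (d choose j) L (X ^ j)`, so `L` vanishes on polynomials of degree `≤ d`.
-/

open Polynomial Finset

theorem succ_le_mul_sub_of_ceil_le {d α m : ℕ} (hd : α < d)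
    (hm : ⌈((d : ℚ) + 1) / ((d : ℚ) - (α : ℚ))⌉ ≤ m) : d + 1 ≤ m * (d - α) := by
  have hpos : (0 : ℚ) < (d : ℚ) - α := by
    rw [sub_pos]; exact_mod_cast hd
  rw [Int.ceil_le, div_le_iff₀ hpos] at hm
  have : ((d : ℚ) + 1) ≤ m * ((d - α : ℕ) : ℚ) := by
    rw [Nat.cast_sub hd.le]; exact_mod_cast hm
  exact_mod_cast this

section

variable {K : Type*} [Field K]

theorem map_mul_eq_zero_of_natDegree_lt {M : Type*} [AddCommGroup M] [Module K M]
    (L : K[X] →ₗ[K] M) {f q : K[X]} {n : ℕ}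
    (hL : ∀ p < n, L (X ^ p * f) = 0) (hq : q.natDegree < n) : L (q * f) = 0 := by
  rw [q.as_sum_range' n hq, Finset.sum_mul, map_sum]
  refine Finset.sum_eq_zero fun p hp => ?_
  rw [← C_mul_X_pow_eq_monomial, mul_assoc, ← smul_eq_C_mul, map_smul,
    hL p (Finset.mem_range.mp hp), smul_zero]

theorem map_X_sub_C_pow_eq_zero (L : K[X] →ₗ[K] K) {a : K} {d α j : ℕ}
    (hL : ∀ p < d - α, L (X ^ p * (X - C a) ^ (α + 1)) = 0) (hαj : α < j) (hjd : j ≤ d) :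
    L ((X - C a) ^ j) = 0 := by
  rw [show j = (j - (α + 1)) + (α + 1) by omega, pow_add]
  exact map_mul_eq_zero_of_natDegree_lt L hL
    (by rw [natDegree_pow, natDegree_X_sub_C, mul_one]; omega)

/-- The Taylor expansion at `a` of `u ↦ L ((X - u) ^ d)`. -/
noncomputable def apolarPoly (L : K[X] →ₗ[K] K) (d : ℕ) (a : K) : K[X] :=
  ∑ j ∈ range (d + 1), C (d.choose j * L ((X - C a) ^ j)) * (C a - X) ^ (d - j)

theorem eval_apolarPoly (L : K[X] →ₗ[K] K) (d : ℕ) (a u : K) :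
    (apolarPoly L d a).eval u = L ((X - C u) ^ d) := by
  have hexp : (X - C u : K[X]) ^ d
      = ∑ j ∈ range (d + 1), ((a - u) ^ (d - j) * d.choose j) • (X - C a) ^ j := by
    rw [show (X - C u : K[X]) = (X - C a) + C (a - u) by rw [C_sub]; ring, add_pow]
    refine Finset.sum_congr rfl fun j _ => ?_
    rw [smul_eq_C_mul, C_mul, C_pow, map_natCast]
    ring
  simp only [hexp, map_sum, map_smul, smul_eq_mul, apolarPoly, eval_finsetSum, eval_mul,
    eval_pow, eval_C, eval_sub, eval_X]
  exact Finset.sum_congr rfl fun j _ => by ring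

theorem apolarPoly_eq_apolarPoly_zero [Infinite K] (L : K[X] →ₗ[K] K) (d : ℕ) (a : K) :
    apolarPoly L d a = apolarPoly L d 0 :=
  Polynomial.funext fun u => by rw [eval_apolarPoly, eval_apolarPoly]

theorem natDegree_apolarPoly_le (L : K[X] →ₗ[K] K) (d : ℕ) (a : K) :
    (apolarPoly L d a).natDegree ≤ d := by
  refine natDegree_sum_le_of_forall_le _ _ fun j hj => ?_
  refine natDegree_C_mul_le _ _ |>.trans <| natDegree_pow_le.trans ?_
  have : (C a - X : K[X]).natDegree ≤ 1 := (natDegree_sub_le _ _).trans (by simp)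
  exact (Nat.mul_le_mul_left _ this).trans (by omega)

theorem pow_dvd_apolarPoly (L : K[X] →ₗ[K] K) {d k : ℕ} {a : K}
    (hL : ∀ j, k < j → j ≤ d → L ((X - C a) ^ j) = 0) :
    (X - C a) ^ (d - k) ∣ apolarPoly L d a := by
  refine Finset.dvd_sum fun j hj => ?_
  rcases le_or_gt j k with hjk | hkj
  · rw [show (C a - X : K[X]) = -(X - C a) by ring, neg_pow]
    exact dvd_mul_of_dvd_right ((pow_dvd_pow _ (by omega)).mul_left _) _
  · rw [hL j hkj (by have := Finset.mem_range.mp hj; omega), mul_zero, map_zero, zero_mul]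
    exact dvd_zero _

theorem coeff_apolarPoly_zero (L : K[X] →ₗ[K] K) {d j : ℕ} (hj : j ≤ d) :
    (apolarPoly L d 0).coeff (d - j) = (-1) ^ (d - j) * d.choose j * L (X ^ j) := by
  have hX : apolarPoly L d 0 =
      ∑ i ∈ range (d + 1), C ((-1) ^ (d - i) * d.choose i * L (X ^ i)) * X ^ (d - i) := by
    refine Finset.sum_congr rfl fun i _ => ?_
    rw [C_0, sub_zero, zero_sub, neg_pow, C_mul, C_mul, C_mul, C_pow, C_neg, C_1]
    ring
  rw [hX, finsetSum_coeff, Finset.sum_eq_single j]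
  · rw [coeff_C_mul_X_pow, if_pos rfl]
  · intro i hi hij
    rw [coeff_C_mul_X_pow, if_neg (by have := Finset.mem_range.mp hi; omega)]
  · intro hj'
    exact absurd (Finset.mem_range.mpr (by omega)) hj'

theorem map_X_pow_eq_zero_of_map_mul_X_sub_C_pow_eq_zero [CharZero K] {m d α : ℕ}
    {x : Fin m → K} (hx : Function.Injective x) (hcount : d + 1 ≤ m * (d - α))
    {L : K[X] →ₗ[K] K} (hL : ∀ t, ∀ p < d - α, L (X ^ p * (X - C (x t)) ^ (α + 1)) = 0)
    {j : ℕ} (hj : j ≤ d) : L (X ^ j) = 0 := by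
  have hdvd : ∀ t, (X - C (x t)) ^ (d - α) ∣ apolarPoly L d 0 := fun t => by
    rw [← apolarPoly_eq_apolarPoly_zero L d (x t)]
    exact pow_dvd_apolarPoly L fun i hαi hid => map_X_sub_C_pow_eq_zero L (hL t) hαi hid
  have hprod : (∏ t, (X - C (x t)) ^ (d - α)) ∣ apolarPoly L d 0 :=
    Finset.prod_dvd_of_coprime (fun a _ b _ hab => (pairwise_coprime_X_sub_C hx hab).pow)
      fun t _ => hdvd t
  have hzero : apolarPoly L d 0 = 0 := by
    by_contra hne
    have hdeg := natDegree_le_of_dvd hprod hne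
    rw [natDegree_prod _ _ fun t _ => pow_ne_zero _ (X_sub_C_ne_zero _)] at hdeg
    simp only [natDegree_pow, natDegree_X_sub_C, mul_one, sum_const, card_univ,
      Fintype.card_fin, smul_eq_mul] at hdeg
    have := natDegree_apolarPoly_le L d 0
    omega
  have hcoeff := coeff_apolarPoly_zero L hj
  rw [hzero, coeff_zero, eq_comm] at hcoeff
  simpa [Nat.choose_pos hj |>.ne'] using hcoeff

theorem rank_coeff_matrix_eq_succ {ι : Type*} [Fintype ι] {d : ℕ} (P : ι → K[X])
    (hP : ∀ L : K[X] →ₗ[K] K, (∀ c, L (P c) = 0) → ∀ j ≤ d, L (X ^ j) = 0) :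
    (Matrix.of fun (i : Fin (d + 1)) (c : ι) => (P c).coeff i).rank = d + 1 := by
  set A : Matrix (Fin (d + 1)) ι K := Matrix.of fun i c => (P c).coeff i
  have hinj : Function.Injective A.transpose.mulVecLin := by
    rw [← LinearMap.ker_eq_bot, LinearMap.ker_eq_bot']
    intro l hl
    set L : K[X] →ₗ[K] K := ∑ i, l i • lcoeff K i
    have hLP : ∀ c, L (P c) = 0 := fun c => by
      simpa [L, A, Matrix.vecMul, dotProduct] using congrFun hl c
    funext i
    simpa [L, coeff_X_pow, Fin.val_eq_val] using hP L hLP i (by omega)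
  rw [← Matrix.rank_transpose, Matrix.rank, LinearMap.finrank_range_of_inj hinj,
    Module.finrank_fin_fun]

end

/-- Full row rank of the single-edge conformality matrix: for
`x₁ < ⋯ < x_m`, `0 ≤ α`, `d ≥ α + 1`, `N = ⌈(d+1)/(d−α)⌉` and `m ≥ N`, the
`(d+1) × (m(d−α))` matrix whose columns are the coefficient vectors of the
polynomials `x^p (x − x_t)^(α+1)` (for `1 ≤ t ≤ m`, `0 ≤ p ≤ d−α−1`) in the
monomial basis `1, x, …, x^d` has rank `d + 1`. -/
theorem conformality_matrix_full_rank (d α m N : ℕ)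
    (hd : α + 1 ≤ d)
    (hN : (N : ℤ) = ⌈((d : ℚ) + 1) / ((d : ℚ) - (α : ℚ))⌉)
    (x : Fin m → ℝ) (hx : StrictMono x) (hm : N ≤ m) :
    (Matrix.of fun (i : Fin (d + 1)) (c : Fin m × Fin (d - α)) =>
        ((X ^ (c.2 : ℕ) * (X - C (x c.1)) ^ (α + 1) : ℝ[X]).coeff (i : ℕ))).rank
      = d + 1 := by
  have hcount : d + 1 ≤ m * (d - α) :=
    succ_le_mul_sub_of_ceil_le hd (hN ▸ Int.ofNat_le.mpr hm)
  refine rank_coeff_matrix_eq_succ _ fun L hL j hj => ?_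
  exact map_X_pow_eq_zero_of_map_mul_X_sub_C_pow_eq_zero hx.injective hcount
    (fun t p hp => hL (t, ⟨p, hp⟩)) hj
end

section
/- Let d ≥ 1, 0 ≤ α < d, and let x₀,…,x_k be distinct reals. For any target polynomial q(x) of degree ≤ d, the set of tuples (d₀,…,d_k) of polynomials of degree ≤ d−α−1 with ∑_{t=0}^k d_t(x)(x − x_t)^(α+1) = q(x) is an affine subspace of dimension max(0, (k+1)(d−α) − (d+1)), provided it is nonempty; and it is nonempty whenever (k+1)(d−α) ≥ d+1. -/
/-!
Write `N = α + 1` and `m = d - α`. The map `D ↦ ∑ D_t (X - x_t)^N` goes from a space of dimension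
`(k+1) m` into the polynomials of degree `< N + m`, so everything follows once its kernel has
dimension at most `k m - N`: it then has the maximal rank `min ((k+1) m) (N + m)`. This bound is
proved by induction on the number of nodes. If `N ≤ m`, the coprime powers `(X - x_0)^N` and
`(X - x_1)^N` already combine (Bezout) to every polynomial of degree `< N + m`. If `m ≤ N`, the
substitution `X ↦ x_0 + 1/X` (Taylor shift, then reflection) sends the term of `x_0` to a
polynomial of degree `< m`, and the term of `x_t` to a cofactor of degree `< m` times
`(1 - (x_t - x_0) X)^N`. Differentiating `m` times kills the first and turns the others into
cofactors of degree `< m` times `(X - (x_t - x_0)⁻¹)^(N - m)`, injectively. This embeds the kernel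
into the kernel of the same problem with one node fewer and exponent `N - m`.
-/

open Polynomial

namespace Polynomial

section Semiring

variable {R : Type*} [Semiring R]

noncomputable def reflectₗ (N : ℕ) : R[X] →ₗ[R] R[X] where
  toFun := reflect N
  map_add' p q := reflect_add p q N
  map_smul' c p := by simp only [smul_eq_C_mul, reflect_C_mul, RingHom.id_apply]

lemma reflectₗ_apply (N : ℕ) (p : R[X]) : reflectₗ N p = reflect N p := rfl

lemma natDegree_le_of_mem_degreeLT {n : ℕ} {p : R[X]} (hp : p ∈ R[X]_n) :
    p.natDegree ≤ n - 1 := by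
  rcases n with _ | n
  · simp_all [mem_degreeLT]
  · rw [degreeLT_succ_eq_degreeLE, mem_degreeLE] at hp
    exact natDegree_le_of_degree_le hp

lemma mem_degreeLT_of_natDegree_le {n : ℕ} (hn : 0 < n) {p : R[X]} (hp : p.natDegree ≤ n - 1) :
    p ∈ R[X]_n := by
  obtain ⟨n, rfl⟩ := Nat.exists_eq_add_one_of_ne_zero hn.ne'
  rw [degreeLT_succ_eq_degreeLE, mem_degreeLE]
  exact degree_le_of_natDegree_le hp

lemma natDegree_lt_of_iterate_derivative_eq_zero [Module.IsTorsionFree ℕ R] {p : R[X]} {j : ℕ}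
    (hp : p ≠ 0) (h : derivative^[j] p = 0) : p.natDegree < j := by
  by_contra! hj
  have := congrArg (coeff · (p.natDegree - j)) h
  simp only [coeff_iterate_derivative, Nat.sub_add_cancel hj, coeff_zero] at this
  exact hp (leadingCoeff_eq_zero.mp ((smul_eq_zero.mp this).resolve_left
    (Nat.descFactorial_pos.mpr hj).ne'))

lemma finrank_degreeLT [StrongRankCondition R] (n : ℕ) : Module.finrank R R[X]_n = n := by
  simp [Module.finrank_eq_card_basis (degreeLT.basis R n)]

end Semiring

section CommRing

variable {R : Type*} [CommRing R]

lemma reflect_X_sub_C_pow (c : R) (N : ℕ) : reflect N ((X - C c) ^ N) = (1 - C c * X) ^ N := by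
  induction N with
  | zero => simp
  | succ n ih =>
    have hn : ((X - C c) ^ n).natDegree ≤ n := by
      simpa using natDegree_pow_le_of_le n (natDegree_X_sub_C_le c)
    rw [pow_succ, reflect_mul _ _ hn (natDegree_X_sub_C_le c), ih, pow_succ]
    congr 1
    rw [reflect_sub, ← pow_one X, reflect_monomial, reflect_C]
    simp

lemma reflect_mul_X_sub_C_pow {B : R[X]} {n : ℕ} (hB : B.natDegree ≤ n) (c : R) (N : ℕ) :
    reflect (n + N) (B * (X - C c) ^ N) = reflect n B * (1 - C c * X) ^ N := by
  have hN : ((X - C c) ^ N).natDegree ≤ N := by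
    simpa using natDegree_pow_le_of_le N (natDegree_X_sub_C_le c)
  rw [reflect_mul _ _ hB hN, reflect_X_sub_C_pow]

noncomputable def derivStep (z : R) (p : ℕ) : R[X] →ₗ[R] R[X] :=
  LinearMap.mulRight R (X - C z) ∘ₗ derivative + (p : R) • LinearMap.id

lemma derivative_mul_X_sub_C_pow_succ (z : R) (p : ℕ) (A : R[X]) :
    derivative (A * (X - C z) ^ (p + 1)) = derivStep z (p + 1) A * (X - C z) ^ p := by
  simp only [derivStep, derivative_mul, derivative_pow, derivative_sub, derivative_X,
    derivative_C, LinearMap.add_apply, LinearMap.comp_apply, LinearMap.mulRight_apply,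
    LinearMap.smul_apply, LinearMap.id_apply, smul_eq_C_mul, map_natCast]
  push_cast
  ring

noncomputable def derivQuot (z : R) (N : ℕ) : ℕ → R[X] →ₗ[R] R[X]
  | 0 => LinearMap.id
  | j + 1 => derivStep z (N - j) ∘ₗ derivQuot z N j

lemma iterate_derivative_mul_X_sub_C_pow {j N : ℕ} (hj : j ≤ N) (z : R) (A : R[X]) :
    derivative^[j] (A * (X - C z) ^ N) = derivQuot z N j A * (X - C z) ^ (N - j) := by
  induction j with
  | zero => rfl
  | succ j ih =>
    obtain ⟨p, hp⟩ : ∃ p, N - j = p + 1 := ⟨N - j - 1, by omega⟩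
    rw [Function.iterate_succ_apply', ih (by omega), hp, derivative_mul_X_sub_C_pow_succ, ← hp,
      show N - (j + 1) = p by omega]
    rfl

lemma reflect_taylor_mul_X_sub_C_pow {A : R[X]} {n : ℕ} (hA : A.natDegree ≤ n) (r s : R)
    (N : ℕ) :
    reflect (n + N) (taylor r (A * (X - C s) ^ N)) =
      reflect n (taylor r A) * (1 - C (s - r) * X) ^ N := by
  have hX : taylor r (X - C s) = X - C (s - r) := by
    simp only [map_sub, taylor_X, taylor_C]; ring
  rw [taylor_mul, taylor_pow, hX, reflect_mul_X_sub_C_pow (by rwa [natDegree_taylor])]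

variable [IsDomain R]

lemma natDegree_derivQuot_le {j N : ℕ} (hj : j ≤ N) (z : R) (A : R[X]) :
    (derivQuot z N j A).natDegree ≤ A.natDegree := by
  by_cases hA : derivQuot z N j A = 0
  · simp [hA]
  have key := congrArg natDegree (iterate_derivative_mul_X_sub_C_pow hj z A)
  rw [natDegree_mul hA (pow_ne_zero _ (X_sub_C_ne_zero z)), natDegree_pow,
    natDegree_X_sub_C] at key
  have hle := (natDegree_iterate_derivative (A * (X - C z) ^ N) j).trans
    (Nat.sub_le_sub_right natDegree_mul_le j)
  rw [natDegree_pow, natDegree_X_sub_C] at hle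
  omega

lemma derivQuot_eq_zero_iff [CharZero R] {j N : ℕ} (hj : j ≤ N) {z : R} {A : R[X]} :
    derivQuot z N j A = 0 ↔ A = 0 := by
  refine ⟨fun h => by_contra fun hA => ?_, fun h => by rw [h, map_zero]⟩
  have hAu : A * (X - C z) ^ N ≠ 0 := mul_ne_zero hA (pow_ne_zero _ (X_sub_C_ne_zero z))
  have := natDegree_lt_of_iterate_derivative_eq_zero hAu
    (by rw [iterate_derivative_mul_X_sub_C_pow hj, h, zero_mul])
  rw [natDegree_mul hA (pow_ne_zero _ (X_sub_C_ne_zero z)), natDegree_pow,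
    natDegree_X_sub_C] at this
  omega

end CommRing

lemma one_sub_C_mul_X_pow {K : Type*} [Field K] {c : K} (hc : c ≠ 0) (N : ℕ) :
    (1 - C c * X) ^ N = C ((-c) ^ N) * (X - C c⁻¹) ^ N := by
  rw [C_pow, ← mul_pow, mul_sub, ← C_mul, neg_mul, mul_inv_cancel₀ hc, map_neg, map_neg, C_1]
  ring

lemma exists_mul_add_mul_eq_of_isCoprime {R : Type*} [CommRing R] [Nontrivial R]
    {f g p : R[X]} {m : ℕ}
    (hf : f.Monic) (hfg : IsCoprime f g) (hfm : f.natDegree ≤ m) (hgm : g.natDegree ≤ m)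
    (hp : p.degree < (f.natDegree + m : ℕ)) :
    ∃ a b : R[X], a.degree < m ∧ b.degree < m ∧ a * f + b * g = p := by
  obtain ⟨u, v, huv⟩ := hfg
  set a := p * u + p * v /ₘ f * g
  set b := p * v %ₘ f
  have hab : a * f + b * g = p := by
    linear_combination p * huv + g * modByMonic_add_div (p * v) f
  have hb : b.degree < f.natDegree := by
    rw [← degree_eq_natDegree hf.ne_zero]; exact degree_modByMonic_lt _ hf
  have hbg : (b * g).degree < (f.natDegree + m : ℕ) :=
    calc (b * g).degree ≤ b.degree + g.natDegree :=
          degree_mul_le_of_le le_rfl degree_le_natDegree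
      _ < (f.natDegree + m : ℕ) := by
          push_cast
          exact WithBot.add_lt_add_of_lt_of_le WithBot.coe_ne_bot hb (by exact_mod_cast hgm)
  have haf : (a * f).degree < (f.natDegree + m : ℕ) := by
    rw [eq_sub_of_add_eq hab]
    exact (degree_sub_le _ _).trans_lt (max_lt hp hbg)
  rw [hf.degree_mul, degree_eq_natDegree hf.ne_zero, Nat.cast_add,
    add_comm (f.natDegree : WithBot ℕ)] at haf
  exact ⟨a, b, (WithBot.add_lt_add_iff_right WithBot.coe_ne_bot).mp haf,
    hb.trans_le (by exact_mod_cast hfm), hab⟩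

end Polynomial

section cofactorMap

variable {K : Type*} [Field K] {ι : Type*} [Fintype ι]

noncomputable def cofactorMap (N m : ℕ) (x : ι → K) : (ι → K[X]_m) →ₗ[K] K[X] where
  toFun D := ∑ t, (D t : K[X]) * (X - C (x t)) ^ N
  map_add' D E := by simp [add_mul, Finset.sum_add_distrib]
  map_smul' c D := by simp [Finset.smul_sum]

lemma cofactorMap_apply (N m : ℕ) (x : ι → K) (D : ι → K[X]_m) :
    cofactorMap N m x D = ∑ t, (D t : K[X]) * (X - C (x t)) ^ N := rfl

lemma cofactorMap_single [DecidableEq ι] (N m : ℕ) (x : ι → K) (t : ι) (A : K[X]_m) :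
    cofactorMap N m x (Pi.single t A) = (A : K[X]) * (X - C (x t)) ^ N := by
  rw [cofactorMap_apply, Finset.sum_eq_single t (fun s _ hs => by simp [hs]) (by simp)]
  simp

lemma range_cofactorMap_le (N m : ℕ) (x : ι → K) :
    LinearMap.range (cofactorMap N m x) ≤ K[X]_(N + m) := by
  rintro _ ⟨D, rfl⟩
  refine Submodule.sum_mem _ fun t _ => mem_degreeLT.mpr ?_
  calc ((D t : K[X]) * (X - C (x t)) ^ N).degree
      ≤ (D t : K[X]).degree + N := degree_mul_le_of_le le_rfl (by simp)
    _ < (N + m : ℕ) := by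
      rw [add_comm N, Nat.cast_add]
      exact WithBot.add_lt_add_of_lt_of_le WithBot.coe_ne_bot (mem_degreeLT.mp (D t).2) le_rfl

lemma finrank_range_add_finrank_ker_cofactorMap (N m : ℕ) (x : ι → K) :
    Module.finrank K (LinearMap.range (cofactorMap N m x)) +
      Module.finrank K (LinearMap.ker (cofactorMap N m x)) = Fintype.card ι * m := by
  rw [LinearMap.finrank_range_add_finrank_ker, Module.finrank_pi_fintype]
  simp [finrank_degreeLT]

lemma finrank_range_cofactorMap_le (N m : ℕ) (x : ι → K) :
    Module.finrank K (LinearMap.range (cofactorMap N m x)) ≤ N + m :=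
  (Submodule.finrank_mono (range_cofactorMap_le N m x)).trans_eq (finrank_degreeLT _)

lemma ker_cofactorMap_eq_bot [Unique ι] (N m : ℕ) (x : ι → K) :
    LinearMap.ker (cofactorMap N m x) = ⊥ := by
  refine (Submodule.eq_bot_iff _).mpr fun D hD => funext fun t => Subtype.ext ?_
  rw [LinearMap.mem_ker, cofactorMap_apply, Fintype.sum_unique] at hD
  rw [Unique.eq_default t]
  exact (mul_eq_zero.mp hD).resolve_right (pow_ne_zero _ (X_sub_C_ne_zero _))

lemma degreeLT_le_range_cofactorMap [DecidableEq ι] {N m : ℕ} {x : ι → K} {i j : ι}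
    (hij : x i ≠ x j) (hNm : N ≤ m) :
    K[X]_(N + m) ≤ LinearMap.range (cofactorMap N m x) := by
  intro p hp
  have hcop : IsCoprime ((X - C (x i)) ^ N) ((X - C (x j)) ^ N) :=
    (isCoprime_X_sub_C_of_isUnit_sub (sub_ne_zero.mpr hij).isUnit).pow
  obtain ⟨a, b, ha, hb, hab⟩ := exists_mul_add_mul_eq_of_isCoprime ((monic_X_sub_C _).pow N)
    hcop (by simpa using hNm) (by simpa using hNm) (by simpa using mem_degreeLT.mp hp)
  refine ⟨Pi.single i ⟨a, mem_degreeLT.mpr ha⟩ + Pi.single j ⟨b, mem_degreeLT.mpr hb⟩, ?_⟩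
  rw [map_add, cofactorMap_single, cofactorMap_single]
  exact hab

section ElimNode

variable {k : ℕ} (x : Fin (k + 2) → K)

noncomputable def invNodes : Fin (k + 1) → K := fun t => (x t.succ - x 0)⁻¹

lemma invNodes_injective (hx : Function.Injective x) : Function.Injective (invNodes x) :=
  fun _ _ h => Fin.succ_injective _ (hx (sub_left_injective (inv_injective h)))

lemma succ_sub_zero_ne_zero (hx : Function.Injective x) (t : Fin (k + 1)) :
    x t.succ - x 0 ≠ 0 :=
  sub_ne_zero.mpr fun h => Fin.succ_ne_zero t (hx h)

noncomputable def elimNodeCofactor (N m : ℕ) (t : Fin (k + 1)) : K[X] →ₗ[K] K[X] :=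
  (-(x t.succ - x 0)) ^ N • (derivQuot (invNodes x t) N m ∘ₗ reflectₗ (m - 1) ∘ₗ taylor (x 0))

lemma elimNodeCofactor_apply (N m : ℕ) (t : Fin (k + 1)) (A : K[X]) :
    elimNodeCofactor x N m t A =
      (-(x t.succ - x 0)) ^ N • derivQuot (invNodes x t) N m (reflect (m - 1) (taylor (x 0) A)) :=
  rfl

variable {N m : ℕ}

lemma elimNodeCofactor_mem (hmN : m ≤ N) (t : Fin (k + 1)) {A : K[X]} (hA : A ∈ K[X]_m) :
    elimNodeCofactor x N m t A ∈ K[X]_m := by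
  rcases Nat.eq_zero_or_pos m with rfl | hm
  · simp_all [mem_degreeLT]
  refine mem_degreeLT_of_natDegree_le hm ?_
  rw [elimNodeCofactor_apply]
  refine (natDegree_smul_le _ _).trans <| (natDegree_derivQuot_le hmN _ _).trans <|
    natDegree_reflect_le.trans (max_le le_rfl ?_)
  rw [natDegree_taylor]
  exact natDegree_le_of_mem_degreeLT hA

noncomputable def elimNode (hmN : m ≤ N) : (Fin (k + 2) → K[X]_m) →ₗ[K] (Fin (k + 1) → K[X]_m) :=
  LinearMap.pi fun t =>
    (elimNodeCofactor x N m t).restrict (fun _ hA => elimNodeCofactor_mem x hmN t hA) ∘ₗ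
      LinearMap.proj t.succ

lemma elimNode_apply (hmN : m ≤ N) (a : Fin (k + 2) → K[X]_m) (t : Fin (k + 1)) :
    (elimNode x hmN a t : K[X]) = elimNodeCofactor x N m t (a t.succ) := rfl

lemma cofactorMap_elimNode (hx : Function.Injective x) (hm : 0 < m) (hmN : m ≤ N)
    (a : Fin (k + 2) → K[X]_m) :
    cofactorMap (N - m) m (invNodes x) (elimNode x hmN a) =
      derivative^[m] (reflect (m - 1 + N) (taylor (x 0) (cofactorMap N m x a))) := by
  have hterm (t : Fin (k + 2)) :
      reflect (m - 1 + N) (taylor (x 0) ((a t : K[X]) * (X - C (x t)) ^ N)) =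
        reflect (m - 1) (taylor (x 0) (a t)) * (1 - C (x t - x 0) * X) ^ N :=
    reflect_taylor_mul_X_sub_C_pow (natDegree_le_of_mem_degreeLT (a t).2) _ _ _
  have hhead : derivative^[m] (reflect (m - 1) (taylor (x 0) (a 0))) = 0 := by
    refine iterate_derivative_eq_zero (natDegree_reflect_le.trans_lt (max_lt (by omega) ?_))
    rw [natDegree_taylor]
    exact (natDegree_le_of_mem_degreeLT (a 0).2).trans_lt (by omega)
  rw [cofactorMap_apply, cofactorMap_apply, map_sum, ← reflectₗ_apply, map_sum,
    iterate_derivative_sum, Fin.sum_univ_succ (n := k + 1)]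
  simp only [reflectₗ_apply, hterm, sub_self, map_zero, zero_mul,
    sub_zero, one_pow, mul_one, hhead, zero_add]
  refine Finset.sum_congr rfl fun t _ => ?_
  rw [one_sub_C_mul_X_pow (succ_sub_zero_ne_zero x hx t), mul_left_comm,
    iterate_derivative_C_mul, iterate_derivative_mul_X_sub_C_pow hmN, elimNode_apply,
    elimNodeCofactor_apply, smul_eq_C_mul, invNodes]
  ring

lemma elimNode_mem_ker (hx : Function.Injective x) (hm : 0 < m) (hmN : m ≤ N)
    {a : Fin (k + 2) → K[X]_m} (ha : a ∈ LinearMap.ker (cofactorMap N m x)) :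
    elimNode x hmN a ∈ LinearMap.ker (cofactorMap (N - m) m (invNodes x)) := by
  rw [LinearMap.mem_ker] at ha ⊢
  rw [cofactorMap_elimNode x hx hm hmN, ha, map_zero, reflect_zero, iterate_derivative_zero]

lemma eq_zero_of_elimNode_eq_zero [CharZero K] (hx : Function.Injective x) (hmN : m ≤ N)
    {a : Fin (k + 2) → K[X]_m} (ha : cofactorMap N m x a = 0) (h : elimNode x hmN a = 0) :
    a = 0 := by
  have htail (t : Fin (k + 1)) : (a t.succ : K[X]) = 0 := by
    have ht := congrArg (fun b => (b t : K[X])) h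
    simp only [elimNode_apply, elimNodeCofactor_apply, Pi.zero_apply, ZeroMemClass.coe_zero,
      smul_eq_zero, pow_eq_zero_iff', neg_eq_zero, succ_sub_zero_ne_zero x hx t, false_and,
      false_or, derivQuot_eq_zero_iff hmN, reflect_eq_zero_iff, taylor_eq_zero] at ht
    exact ht
  have hhead : (a 0 : K[X]) = 0 := by
    simpa [cofactorMap_apply, Fin.sum_univ_succ, htail, X_sub_C_ne_zero] using ha
  funext t
  refine Subtype.ext (Fin.cases hhead htail t)

lemma finrank_ker_le_finrank_ker_elimNode [CharZero K] (hx : Function.Injective x) (hm : 0 < m)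
    (hmN : m ≤ N) :
    Module.finrank K (LinearMap.ker (cofactorMap N m x)) ≤
      Module.finrank K (LinearMap.ker (cofactorMap (N - m) m (invNodes x))) := by
  refine LinearMap.finrank_le_finrank_of_injective
    (f := (elimNode x hmN).restrict fun _ ha => elimNode_mem_ker x hx hm hmN ha) ?_
  rintro ⟨a, ha⟩ ⟨b, hb⟩ hab
  have hab' : elimNode x hmN (a - b) = 0 := by
    rw [map_sub, sub_eq_zero]; exact congrArg Subtype.val hab
  have hker : cofactorMap N m x (a - b) = 0 := by
    rw [map_sub, LinearMap.mem_ker.mp ha, LinearMap.mem_ker.mp hb, sub_zero]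
  exact Subtype.ext (sub_eq_zero.mp (eq_zero_of_elimNode_eq_zero x hx hmN hker hab'))

end ElimNode

variable [CharZero K] {m : ℕ}

theorem finrank_ker_cofactorMap_le (hm : 0 < m) {k N : ℕ} {x : Fin (k + 1) → K}
    (hx : Function.Injective x) :
    Module.finrank K (LinearMap.ker (cofactorMap N m x)) ≤ k * m - N := by
  induction k generalizing N with
  | zero => simp [ker_cofactorMap_eq_bot]
  | succ k ih =>
    rw [add_one_mul]
    rcases le_total m N with hmN | hNm
    · refine (finrank_ker_le_finrank_ker_elimNode x hx hm hmN).trans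
        ((ih (invNodes_injective x hx)).trans ?_)
      omega
    · have hrange := le_antisymm (range_cofactorMap_le N m x)
        (degreeLT_le_range_cofactorMap (i := 0) (j := 1) (hx.ne (by simp)) hNm)
      have := finrank_range_add_finrank_ker_cofactorMap N m x
      rw [hrange, finrank_degreeLT, Fintype.card_fin, add_one_mul, add_one_mul] at this
      omega

theorem finrank_ker_cofactorMap (hm : 0 < m) {k N : ℕ} {x : Fin (k + 1) → K}
    (hx : Function.Injective x) :
    Module.finrank K (LinearMap.ker (cofactorMap N m x)) = (k + 1) * m - (N + m) := by
  have hle := finrank_ker_cofactorMap_le hm (N := N) hx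
  have hrange := finrank_range_cofactorMap_le N m x
  have := finrank_range_add_finrank_ker_cofactorMap N m x
  rw [Fintype.card_fin] at this
  rw [add_one_mul] at this ⊢
  omega

theorem range_cofactorMap (hm : 0 < m) {k N : ℕ} {x : Fin (k + 1) → K}
    (hx : Function.Injective x) (hNm : N + m ≤ (k + 1) * m) :
    LinearMap.range (cofactorMap N m x) = K[X]_(N + m) := by
  refine Submodule.eq_of_le_of_finrank_eq (range_cofactorMap_le N m x) ?_
  have := finrank_range_add_finrank_ker_cofactorMap N m x
  rw [Fintype.card_fin, finrank_ker_cofactorMap hm hx] at this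
  rw [finrank_degreeLT]
  omega

end cofactorMap

lemma LinearMap.setOf_apply_eq_eq_image_add_ker {R M M₂ : Type*} [Ring R] [AddCommGroup M]
    [AddCommGroup M₂] [Module R M] [Module R M₂] (f : M →ₗ[R] M₂) {D₀ : M} {q : M₂}
    (h : f D₀ = q) : {D | f D = q} = (fun D => D₀ + D) '' (LinearMap.ker f : Set M) := by
  ext D
  simp only [Set.mem_ofPred_eq, Set.mem_image, SetLike.mem_coe, LinearMap.mem_ker]
  constructor
  · intro hD
    exact ⟨D - D₀, by rw [map_sub, hD, h, sub_self], add_sub_cancel D₀ D⟩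
  · rintro ⟨E, hE, rfl⟩
    rw [map_add, hE, add_zero, h]

theorem conformality_affine_solution_set_general (d α k : ℕ) (hαd : α < d)
    (x : Fin (k + 1) → ℝ) (hx : Function.Injective x)
    (q : ℝ[X]) (hq : q.degree ≤ d) :
    (∀ D₀, confMap k d α x D₀ = q →
        {D | confMap k d α x D = q} =
          (fun D => D₀ + D) '' (LinearMap.ker (confMap k d α x) : Set _)) ∧
    ((Module.finrank ℝ (LinearMap.ker (confMap k d α x)) : ℤ) =
        max 0 ((k + 1) * ((d : ℤ) - α) - (d + 1))) ∧
    (d + 1 ≤ (k + 1) * (d - α) → ∃ D, confMap k d α x D = q) := by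
  have hconf : confMap k d α x = cofactorMap (α + 1) (d - α) x := rfl
  have hm : 0 < d - α := Nat.sub_pos_of_lt hαd
  have hdeg : α + 1 + (d - α) = d + 1 := by omega
  refine ⟨fun D₀ => (confMap k d α x).setOf_apply_eq_eq_image_add_ker, ?_, fun hsurj => ?_⟩
  · have hcast : ((k : ℤ) + 1) * ((d : ℤ) - α) = ((k + 1) * (d - α) : ℕ) := by
      push_cast [hαd.le]; ring
    rw [hconf, finrank_ker_cofactorMap hm hx, hcast, hdeg]
    omega
  · have hq' : q ∈ LinearMap.range (cofactorMap (α + 1) (d - α) x) := by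
      rw [range_cofactorMap hm hx (by omega), hdeg, mem_degreeLT]
      exact hq.trans_lt (by exact_mod_cast Nat.lt_succ_self d)
    exact LinearMap.mem_range.mp hq'

/-- The 'ray' case of the conformality analysis: for a target polynomial `q`
of degree `≤ d`, the solution set `{D : ∑ d_t(x)(x−x_t)^(α+1) = q}` is, when
nonempty, a coset of the kernel of the conformality map, whose dimension is
`max(0, (k+1)(d−α) − (d+1))`; and the solution set is nonempty whenever
`(k+1)(d−α) ≥ d+1`. -/
theorem conformality_affine_solution_set (d α k : ℕ) (hd : 1 ≤ d) (hαd : α < d)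
    (x : Fin (k + 1) → ℝ) (hx : Function.Injective x)
    (q : ℝ[X]) (hq : q.degree ≤ d) :
    (∀ D₀, confMap k d α x D₀ = q →
        {D | confMap k d α x D = q} =
          (fun D => D₀ + D) '' (LinearMap.ker (confMap k d α x) : Set _)) ∧
    ((Module.finrank ℝ (LinearMap.ker (confMap k d α x)) : ℤ) =
        max 0 ((k + 1) * ((d : ℤ) - α) - (d + 1))) ∧
    (d + 1 ≤ (k + 1) * (d - α) → ∃ D, confMap k d α x D = q) :=
  conformality_affine_solution_set_general d α k hαd x hx q hq
end
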